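/- arXiv:1905.10477 — 5 statements merged into one kernel-verified Lean document; each statement's English description precedes it below -/
import Mathlib

section
/- There exist a universal constant c₀ > 0 and a natural number N₀ such that for every n ≥ N₀, every natural number k with 1 ≤ k ≤ n/2, and every ε with 2/n ≤ ε ≤ 1/4, there exist n-node graphs G₀, G₁ ∈ 𝒢_{n,k} at node distance at most ⌈1/ε⌉ such that |p_{G₀} − p_{G₁}| ≥ c₀·k/(ε·n²). -/
open MeasureTheory Finset
open scoped Classical

noncomputable section

/-- Two `n`-node graphs are node-adjacent if every edge in the symmetric
difference of their edge sets is incident to a single vertex `i`. -/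
def NodeAdjacent {n : ℕ} (G G' : SimpleGraph (Fin n)) : Prop :=
  ∃ i : Fin n, ∀ u v : Fin n, ¬ (G.Adj u v ↔ G'.Adj u v) → u = i ∨ v = i

/-- `G` and `G'` are at node distance at most `c`: there is a path of length `c`
of consecutively node-adjacent graphs from `G` to `G'`. -/
def NodeDistLE {n : ℕ} (G G' : SimpleGraph (Fin n)) (c : ℕ) : Prop :=
  ∃ g : ℕ → SimpleGraph (Fin n), g 0 = G ∧ g c = G' ∧
    ∀ j < c, NodeAdjacent (g j) (g (j + 1))

/-- `(ε,δ)`-node-differential privacy for a randomized algorithm, viewed as a map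
assigning to each graph a (probability) measure on the output space `R`. -/
def NodeDP {n : ℕ} {R : Type*} [MeasurableSpace R]
    (A : SimpleGraph (Fin n) → Measure R) (ε δ : ℝ) : Prop :=
  ∀ G G' : SimpleGraph (Fin n), NodeAdjacent G G' → ∀ S : Set R, MeasurableSet S →
    ((A G) S).toReal ≤ Real.exp ε * ((A G') S).toReal + δ

/-- Number of edges of `G`. -/
def edgeCount {n : ℕ} (G : SimpleGraph (Fin n)) : ℕ := G.edgeSet.ncard

/-- The empirical edge density `p_G = |E| / C(n,2)`. -/
def edgeDensity {n : ℕ} (G : SimpleGraph (Fin n)) : ℝ :=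
  (edgeCount G : ℝ) / (n.choose 2 : ℝ)

/-- Degree of a vertex. -/
def deg {n : ℕ} (G : SimpleGraph (Fin n)) (v : Fin n) : ℕ := (G.neighborSet v).ncard

/-- Average degree `d̄_G = 2|E|/n  ( = (n-1)·p_G )`. -/
def avgDeg {n : ℕ} (G : SimpleGraph (Fin n)) : ℝ := 2 * (edgeCount G : ℝ) / n

/-- `G ∈ 𝒢_{n,k}` : every degree lies in `[d̄ - k, d̄ + k]`. -/
def Concentrated {n : ℕ} (G : SimpleGraph (Fin n)) (k : ℝ) : Prop :=
  ∀ v : Fin n, |(deg G v : ℝ) - avgDeg G| ≤ k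

/-- The number of vertices whose degree lies outside `[d̄_G - k* - 3m, d̄_G + k* + 3m]`. -/
def farCount {n : ℕ} (G : SimpleGraph (Fin n)) (kstar : ℝ) (m : ℕ) : ℕ :=
  {v : Fin n | kstar + 3 * (m : ℝ) < |(deg G v : ℝ) - avgDeg G|}.ncard

/-- `k_G` : the smallest positive integer `m` such that at most `m` vertices have
degree outside `[d̄_G - k* - 3m, d̄_G + k* + 3m]`. -/
def kOf {n : ℕ} (G : SimpleGraph (Fin n)) (kstar : ℝ) : ℕ :=
  sInf {m : ℕ | 0 < m ∧ farCount G kstar m ≤ m}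

/-- `t_v` : the distance from `deg_G(v)` to the interval `I_G`. -/
def tDist {n : ℕ} (G : SimpleGraph (Fin n)) (kstar : ℝ) (v : Fin n) : ℝ :=
  max 0 (|(deg G v : ℝ) - avgDeg G| - (kstar + 3 * (kOf G kstar : ℝ)))

/-- The weight `wt_G(v) = max(0, 1 - β t_v)`. -/
def wt {n : ℕ} (G : SimpleGraph (Fin n)) (kstar β : ℝ) (v : Fin n) : ℝ :=
  max 0 (1 - β * tDist G kstar v)

/-- The value of the pair `{u,v}`:
`val_G({u,v}) = wt_G({u,v})·x_{uv} + (1 - wt_G({u,v}))·p_G`,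
where `wt_G({u,v}) = min(wt_G(u), wt_G(v))`. -/
def valPair {n : ℕ} (G : SimpleGraph (Fin n)) (kstar β : ℝ) (u v : Fin n) : ℝ :=
  min (wt G kstar β u) (wt G kstar β v) * (if G.Adj u v then 1 else 0)
    + (1 - min (wt G kstar β u) (wt G kstar β v)) * edgeDensity G

/-- `f(G)` : the sum of `val_G({u,v})` over unordered pairs of distinct vertices. -/
def fEst {n : ℕ} (G : SimpleGraph (Fin n)) (kstar β : ℝ) : ℝ :=
  (∑ u : Fin n, ∑ v : Fin n, if u ≠ v then valPair G kstar β u v else 0) / 2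

/-- `f_u(G) = Σ_{v ≠ u} val_G({u,v})`. -/
def fVert {n : ℕ} (G : SimpleGraph (Fin n)) (kstar β : ℝ) (u : Fin n) : ℝ :=
  ∑ v ∈ Finset.univ.erase u, valPair G kstar β u v

/-- The smooth upper bound
`S(G) = sup_{ℓ ≥ 0} e^{-βℓ} · C·((k_G+ℓ+k*)(1+β(k_G+ℓ)) + 1/β)`. -/
def smoothS {n : ℕ} (G : SimpleGraph (Fin n)) (kstar β C : ℝ) : ℝ :=
  ⨆ ℓ : {x : ℝ // 0 ≤ x},
    Real.exp (-β * (ℓ : ℝ)) *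
      (C * (((kOf G kstar : ℝ) + (ℓ : ℝ) + kstar) * (1 + β * ((kOf G kstar : ℝ) + (ℓ : ℝ))) + 1 / β))

/-- The Student's t-distribution with 3 degrees of freedom, as a measure on `ℝ`. -/
def studentT3 : Measure ℝ :=
  MeasureTheory.volume.withDensity
    (fun z => ENNReal.ofReal (2 / (Real.sqrt 3 * Real.pi * (1 + z ^ 2 / 3) ^ 2)))

/-- The disjoint union of cliques on `Fin n` given by a block-assignment `π`. -/
def cliqueUnion {n i : ℕ} (π : Fin n → Fin i) : SimpleGraph (Fin n) where
  Adj u v := u ≠ v ∧ π u = π v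
  symm := ⟨fun u v h => ⟨Ne.symm h.1, h.2.symm⟩⟩
  loopless := ⟨fun u h => h.1 rfl⟩


/-! The empty graph and a disjoint union of `(k+1)`-cliques, thinned to the edges touching the
first `m = ⌈1/ε⌉` vertices, both have maximum degree at most `k` and hence lie in `𝒢_{n,k}`.
Adding the vertices `0, 1, …, m-1` one at a time walks from the first graph to the second in `m`
node-adjacent steps, while the second graph has at least `mk/2 ≥ k/(2ε)` edges, i.e. edge density
at least `k/(εn²)`. -/

namespace SimpleGraph

variable {V : Type*} (G : SimpleGraph V)

def edgesTouching (s : Set V) : SimpleGraph V where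
  Adj u v := G.Adj u v ∧ (u ∈ s ∨ v ∈ s)
  symm := ⟨fun _ _ h => ⟨h.1.symm, h.2.symm⟩⟩
  loopless := ⟨fun u h => G.loopless.irrefl u h.1⟩

@[simp]
lemma edgesTouching_empty : G.edgesTouching ∅ = ⊥ := by
  ext u v; simp [edgesTouching]

lemma edgesTouching_le (s : Set V) : G.edgesTouching s ≤ G := fun _ _ h => h.1

lemma neighborSet_edgesTouching_of_mem {s : Set V} {v : V} (hv : v ∈ s) :
    (G.edgesTouching s).neighborSet v = G.neighborSet v := by
  ext w; simp [edgesTouching, hv]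

end SimpleGraph

lemma deg_eq_degree {n : ℕ} (G : SimpleGraph (Fin n)) (v : Fin n) : deg G v = G.degree v := by
  rw [deg, ← SimpleGraph.card_neighborSet_eq_degree, Set.ncard_eq_toFinset_card', Set.toFinset_card]

lemma edgeCount_eq_card_edgeFinset {n : ℕ} (G : SimpleGraph (Fin n)) :
    edgeCount G = #G.edgeFinset := by
  rw [edgeCount, ← SimpleGraph.coe_edgeFinset, Set.ncard_coe_finset]

lemma avgDeg_eq_sum_degree_div {n : ℕ} (G : SimpleGraph (Fin n)) :
    avgDeg G = (∑ v, G.degree v : ℕ) / n := by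
  rw [avgDeg, SimpleGraph.sum_degrees_eq_twice_card_edges, edgeCount_eq_card_edgeFinset]
  push_cast
  rfl

lemma concentrated_of_degree_le {n : ℕ} (G : SimpleGraph (Fin n)) {k : ℝ}
    (h : ∀ v, (G.degree v : ℝ) ≤ k) : Concentrated G k := by
  intro v
  have hn : (0 : ℝ) < n := by exact_mod_cast v.pos
  have havg_le : avgDeg G ≤ k := by
    rw [avgDeg_eq_sum_degree_div, div_le_iff₀ hn, Nat.cast_sum]
    simpa [mul_comm] using Finset.sum_le_sum fun v (_ : v ∈ univ) => h v
  have havg_nonneg : 0 ≤ avgDeg G := by rw [avgDeg]; positivity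
  rw [deg_eq_degree, abs_le]
  constructor <;> linarith [h v, (G.degree v).cast_nonneg (α := ℝ)]

@[simp]
lemma edgeDensity_bot {n : ℕ} : edgeDensity (⊥ : SimpleGraph (Fin n)) = 0 := by
  simp [edgeDensity, edgeCount]

lemma two_mul_edgeCount_div_sq_le_edgeDensity {n : ℕ} (hn : 2 ≤ n) (G : SimpleGraph (Fin n)) :
    2 * edgeCount G / (n : ℝ) ^ 2 ≤ edgeDensity G := by
  have hchoose : (0 : ℝ) < n.choose 2 := by exact_mod_cast Nat.choose_pos hn
  rw [edgeDensity, mul_comm, ← div_div_eq_mul_div]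
  refine div_le_div_of_nonneg_left (by positivity) hchoose ?_
  rw [Nat.cast_choose_two]
  nlinarith [(n.cast_nonneg : (0 : ℝ) ≤ n)]

lemma sum_degree_le_two_mul_edgeCount_edgesTouching {n : ℕ} (G : SimpleGraph (Fin n))
    (s : Finset (Fin n)) : ∑ v ∈ s, G.degree v ≤ 2 * edgeCount (G.edgesTouching s) := by
  rw [edgeCount_eq_card_edgeFinset, ← SimpleGraph.sum_degrees_eq_twice_card_edges]
  calc ∑ v ∈ s, G.degree v = ∑ v ∈ s, (G.edgesTouching s).degree v := by
        refine Finset.sum_congr rfl fun v hv => ?_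
        simp only [← deg_eq_degree, deg,
          SimpleGraph.neighborSet_edgesTouching_of_mem G (Finset.mem_coe.2 hv)]
    _ ≤ ∑ v, (G.edgesTouching s).degree v := Finset.sum_le_sum_of_subset (Finset.subset_univ s)

lemma nodeAdjacent_edgesTouching_succ {n : ℕ} (G : SimpleGraph (Fin n)) {j : ℕ} (hj : j < n) :
    NodeAdjacent (G.edgesTouching {v | (v : ℕ) < j}) (G.edgesTouching {v | (v : ℕ) < j + 1}) := by
  refine ⟨⟨j, hj⟩, fun u v huv => ?_⟩
  by_contra! h
  simp only [Fin.ne_iff_vne] at h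
  apply huv
  simp only [SimpleGraph.edgesTouching]
  exact and_congr_right fun _ => by simp only [Set.mem_ofPred_eq]; omega

lemma nodeDistLE_bot_edgesTouching {n m : ℕ} (G : SimpleGraph (Fin n)) (hm : m ≤ n) :
    NodeDistLE ⊥ (G.edgesTouching {v | (v : ℕ) < m}) m :=
  ⟨fun j => G.edgesTouching {v | (v : ℕ) < j}, by simp, rfl,
    fun _ hj => nodeAdjacent_edgesTouching_succ G (hj.trans_le hm)⟩

lemma degree_cliqueUnion_add_one {n i : ℕ} (π : Fin n → Fin i) (u : Fin n) :
    (cliqueUnion π).degree u + 1 = #{v | π v = π u} := by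
  rw [← SimpleGraph.card_neighborFinset_eq_degree, SimpleGraph.neighborFinset_eq_filter]
  have hsplit : univ.filter (fun v => π v = π u) =
      insert u (univ.filter fun v => (cliqueUnion π).Adj u v) := by
    ext v
    by_cases h : v = u
    · simp [h]
    · simp only [Finset.mem_insert, Finset.mem_filter, Finset.mem_univ, true_and, h, false_or]
      exact ⟨fun e => ⟨Ne.symm h, e.symm⟩, fun a => a.2.symm⟩
  rw [hsplit, Finset.card_insert_of_notMem (by simp)]

def blockPartition (n b : ℕ) (u : Fin n) : Fin n :=
  ⟨u / b, (Nat.div_le_self _ _).trans_lt u.2⟩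

lemma card_filter_div_eq {n b : ℕ} (hb : 0 < b) (q : ℕ) :
    #{v : Fin n | (v : ℕ) / b = q} = min n (q * b + b) - min n (q * b) := by
  have hsplit : univ.filter (fun v : Fin n => (v : ℕ) / b = q) =
      univ.filter (fun v : Fin n => (v : ℕ) < q * b + b) \
        univ.filter (fun v : Fin n => (v : ℕ) < q * b) := by
    ext v
    simp only [Finset.mem_filter, Finset.mem_sdiff, Finset.mem_univ, true_and, Nat.div_eq_iff hb]
    omega
  have hsub : univ.filter (fun v : Fin n => (v : ℕ) < q * b) ⊆
      univ.filter (fun v : Fin n => (v : ℕ) < q * b + b) := by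
    intro v
    simp only [Finset.mem_filter, Finset.mem_univ, true_and]
    omega
  rw [hsplit, card_sdiff_of_subset hsub, Fin.card_filter_val_lt, Fin.card_filter_val_lt]

lemma degree_cliqueUnion_blockPartition_add_one {n b : ℕ} (hb : 0 < b) (u : Fin n) :
    (cliqueUnion (blockPartition n b)).degree u + 1 = min n (u / b * b + b) - u / b * b := by
  simp only [degree_cliqueUnion_add_one, blockPartition, Fin.ext_iff, card_filter_div_eq hb]
  have := Nat.div_mul_le_self u b
  omega

lemma degree_cliqueUnion_blockPartition_lt {n b : ℕ} (hb : 0 < b) (u : Fin n) :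
    (cliqueUnion (blockPartition n b)).degree u < b := by
  have := degree_cliqueUnion_blockPartition_add_one hb u
  omega

lemma degree_cliqueUnion_blockPartition_of_add_le {n b : ℕ} (hb : 0 < b) {u : Fin n}
    (hu : u + b ≤ n) : (cliqueUnion (blockPartition n b)).degree u + 1 = b := by
  have := degree_cliqueUnion_blockPartition_add_one hb u
  have := Nat.div_mul_le_self u b
  omega

lemma ceil_inv_add_le {n k : ℕ} {ε : ℝ} (hk : (k : ℝ) ≤ n / 2) (hε : 2 / (n : ℝ) ≤ ε)
    (hn : 0 < n) : ⌈1 / ε⌉₊ + k ≤ n := by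
  have hn' : (0 : ℝ) < n := by exact_mod_cast hn
  have hε0 : 0 < ε := (by positivity : (0 : ℝ) < 2 / n).trans_le hε
  have hinv : 1 / ε ≤ n / 2 := by
    rw [div_le_iff₀ hn'] at hε
    rw [div_le_div_iff₀ hε0 two_pos]
    linarith
  have : (⌈1 / ε⌉₊ : ℝ) + k < n + 1 := by
    linarith [Nat.ceil_lt_add_one (by positivity : (0 : ℝ) ≤ 1 / ε)]
  exact_mod_cast Nat.lt_add_one_iff.1 (by exact_mod_cast this)

lemma degree_edgesTouching_cliqueUnion_blockPartition_le (n k : ℕ) (s : Set (Fin n))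
    (v : Fin n) : ((cliqueUnion (blockPartition n (k + 1))).edgesTouching s).degree v ≤ k :=
  (SimpleGraph.degree_le_of_le (SimpleGraph.edgesTouching_le _ s)).trans <|
    Nat.lt_succ_iff.1 (degree_cliqueUnion_blockPartition_lt k.add_one_pos v)

lemma mul_le_two_mul_edgeCount_edgesTouching_cliqueUnion_blockPartition {n k m : ℕ}
    (hmk : m + k ≤ n) : m * k ≤
      2 * edgeCount ((cliqueUnion (blockPartition n (k + 1))).edgesTouching {v | (v : ℕ) < m}) := by
  set G := cliqueUnion (blockPartition n (k + 1))
  have hfull : ∀ v ∈ univ.filter (fun v : Fin n => (v : ℕ) < m), G.degree v = k := fun v hv => by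
    have : G.degree v + 1 = k + 1 := degree_cliqueUnion_blockPartition_of_add_le k.add_one_pos
      (by simp only [Finset.mem_filter] at hv; omega)
    omega
  calc m * k = ∑ v ∈ univ.filter (fun v : Fin n => (v : ℕ) < m), G.degree v := by
        rw [Finset.sum_congr rfl hfull, Finset.sum_const, Fin.card_filter_val_lt, smul_eq_mul,
          min_eq_right (by omega)]
    _ ≤ _ := by
        simpa using sum_degree_le_two_mul_edgeCount_edgesTouching G
          (univ.filter fun v : Fin n => (v : ℕ) < m)

/-- lower-bound construction for large `k`: two graphs in `𝒢_{n,k}`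
at node distance at most `⌈1/ε⌉` whose edge densities differ by `Ω(k/(ε n²))`. -/
theorem lower_bound_large_k :
    ∃ (c₀ : ℝ) (N₀ : ℕ), 0 < c₀ ∧
      ∀ n : ℕ, N₀ ≤ n → ∀ k : ℕ, 1 ≤ k → (k : ℝ) ≤ (n : ℝ) / 2 →
        ∀ ε : ℝ, 2 / (n : ℝ) ≤ ε → ε ≤ 1 / 4 →
          ∃ G₀ G₁ : SimpleGraph (Fin n),
            Concentrated G₀ (k : ℝ) ∧ Concentrated G₁ (k : ℝ) ∧
            NodeDistLE G₀ G₁ ⌈1 / ε⌉₊ ∧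
            c₀ * (k : ℝ) / (ε * (n : ℝ) ^ 2) ≤ |edgeDensity G₀ - edgeDensity G₁| := by
  refine ⟨1, 0, one_pos, fun n _ k hk hkn ε hεn _ => ?_⟩
  have hn : 2 ≤ n := by
    have : (1 : ℝ) ≤ k := by exact_mod_cast hk
    exact_mod_cast (by linarith : (2 : ℝ) ≤ n)
  have hε : 0 < ε := (by positivity : (0 : ℝ) < 2 / n).trans_le hεn
  set m := ⌈1 / ε⌉₊
  have hmk : m + k ≤ n := ceil_inv_add_le hkn hεn (by omega)
  set G₁ := (cliqueUnion (blockPartition n (k + 1))).edgesTouching {v | (v : ℕ) < m}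
  refine ⟨⊥, G₁, concentrated_of_degree_le _ (by simp),
    concentrated_of_degree_le _ fun v => ?_, nodeDistLE_bot_edgesTouching _ (by omega), ?_⟩
  · exact_mod_cast degree_edgesTouching_cliqueUnion_blockPartition_le n k _ v
  have hedges : (m * k : ℝ) ≤ 2 * edgeCount G₁ := by
    exact_mod_cast mul_le_two_mul_edgeCount_edgesTouching_cliqueUnion_blockPartition hmk
  rw [edgeDensity_bot, zero_sub, abs_neg, one_mul]
  calc (k : ℝ) / (ε * (n : ℝ) ^ 2) = (1 / ε) * k / (n : ℝ) ^ 2 := by field_simp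
    _ ≤ (m : ℝ) * k / (n : ℝ) ^ 2 := by gcongr; exact Nat.le_ceil _
    _ ≤ 2 * (edgeCount G₁ : ℝ) / (n : ℝ) ^ 2 := by gcongr
    _ ≤ |edgeDensity G₁| := (two_mul_edgeCount_div_sq_le_edgeDensity hn G₁).trans (le_abs_self _)

end
end

section
/- Fix a parameter k* ≥ 0 and β > 0, and let G be an n-node graph. For every vertex u of G, the per-vertex sum f_u(G) = Σ_{v ≠ u} val_G({u,v}) satisfies | f_u(G) − d̄_G | ≤ k* + 5·k_G + 1/β. -/
open MeasureTheory Finset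
open scoped Classical

noncomputable section

/-!
Write `x_v = [u ~ v]` and `w_v = wt_G(v)`. Since `Σ_{v ≠ u} p_G = (n - 1) p_G = d̄_G`,
`f_u(G) - d̄_G = Σ_{v ≠ u} min(w_u, w_v) (x_v - p_G)
             = w_u (deg u - d̄_G) + Σ_{v ≠ u} (min(w_u, w_v) - w_u) (x_v - p_G)`.
The first term is at most `k* + 3 k_G + 1/β`, because `deg u` is within `k* + 3 k_G + t_u` of `d̄_G`
and `w_u t_u ≤ 1/β`. In the second sum only the at most `k_G` vertices with degree outside `I_G`
contribute (all others have weight one), each by at most one.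
-/

section

variable {n : ℕ} (G : SimpleGraph (Fin n)) (kstar β : ℝ)

lemma edgeCount_le_choose_two : edgeCount G ≤ n.choose 2 := by
  simpa [edgeCount, Set.ncard_eq_toFinset_card', SimpleGraph.edgeFinset] using
    G.card_edgeFinset_le_card_choose_two

lemma edgeDensity_nonneg : 0 ≤ edgeDensity G := by
  unfold edgeDensity; positivity

lemma edgeDensity_le_one : edgeDensity G ≤ 1 := by
  unfold edgeDensity
  exact div_le_one_of_le₀ (mod_cast edgeCount_le_choose_two G) (Nat.cast_nonneg _)

lemma sub_one_mul_edgeDensity : ((n : ℝ) - 1) * edgeDensity G = avgDeg G := by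
  rcases le_or_gt n 1 with hn | hn
  · have hE : edgeCount G = 0 := by
      have := edgeCount_le_choose_two G
      rwa [Nat.choose_eq_zero_of_lt (by omega), Nat.le_zero] at this
    simp [edgeDensity, avgDeg, hE]
  · have hn' : (1 : ℝ) < n := mod_cast hn
    rw [edgeDensity, avgDeg, Nat.cast_choose_two]
    field_simp [(by linarith : (n : ℝ) - 1 ≠ 0)]

lemma sum_erase_edgeDensity (u : Fin n) :
    ∑ _v ∈ univ.erase u, edgeDensity G = avgDeg G := by
  rw [sum_const, card_erase_of_mem (mem_univ u), card_univ, Fintype.card_fin, nsmul_eq_mul,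
    Nat.cast_pred u.pos, sub_one_mul_edgeDensity]

lemma sum_erase_indicator_adj (u : Fin n) :
    ∑ v ∈ univ.erase u, (if G.Adj u v then (1 : ℝ) else 0) = deg G u := by
  rw [sum_erase _ (by simp), sum_boole, ← SimpleGraph.neighborFinset_eq_filter,
    SimpleGraph.card_neighborFinset_eq_degree, deg, Set.ncard_eq_toFinset_card']
  rfl

lemma farCount_kOf_le : farCount G kstar (kOf G kstar) ≤ kOf G kstar := by
  refine (Nat.sInf_mem (s := {m | 0 < m ∧ farCount G kstar m ≤ m}) ⟨n + 1, n.succ_pos, ?_⟩).2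
  calc farCount G kstar (n + 1) ≤ (Set.univ : Set (Fin n)).ncard :=
        Set.ncard_le_ncard (Set.subset_univ _)
    _ ≤ n + 1 := by simp

lemma tDist_nonneg (v : Fin n) : 0 ≤ tDist G kstar v := le_max_left _ _

lemma abs_deg_sub_avgDeg_le (v : Fin n) :
    |(deg G v : ℝ) - avgDeg G| ≤ kstar + 3 * (kOf G kstar : ℝ) + tDist G kstar v := by
  have := le_max_right 0 (|(deg G v : ℝ) - avgDeg G| - (kstar + 3 * (kOf G kstar : ℝ)))
  rw [tDist]; linarith

lemma wt_nonneg (v : Fin n) : 0 ≤ wt G kstar β v := le_max_left _ _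

variable {β} in
lemma wt_le_one (hβ : 0 ≤ β) (v : Fin n) : wt G kstar β v ≤ 1 :=
  max_le zero_le_one (by nlinarith [tDist_nonneg G kstar v])

lemma wt_eq_one_of_abs_le (v : Fin n)
    (h : |(deg G v : ℝ) - avgDeg G| ≤ kstar + 3 * (kOf G kstar : ℝ)) :
    wt G kstar β v = 1 := by
  have ht : tDist G kstar v = 0 := max_eq_left (by linarith)
  simp [wt, ht]

variable {β} in
lemma wt_mul_tDist_le (hβ : 0 < β) (v : Fin n) : wt G kstar β v * tDist G kstar v ≤ 1 / β := by
  have ht := tDist_nonneg G kstar v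
  rw [wt, le_div_iff₀ hβ]
  rcases le_total (1 - β * tDist G kstar v) 0 with h | h
  · simp [max_eq_left h]
  · rw [max_eq_right h]; nlinarith

variable {kstar β} in
lemma wt_mul_abs_deg_sub_avgDeg_le (hkstar : 0 ≤ kstar) (hβ : 0 < β) (u : Fin n) :
    wt G kstar β u * |(deg G u : ℝ) - avgDeg G| ≤ kstar + 3 * (kOf G kstar : ℝ) + 1 / β := by
  have hw0 := wt_nonneg G kstar β u
  have hw1 := wt_le_one G kstar hβ.le u
  have hk : 0 ≤ kstar + 3 * (kOf G kstar : ℝ) := by positivity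
  calc wt G kstar β u * |(deg G u : ℝ) - avgDeg G|
      ≤ wt G kstar β u * (kstar + 3 * (kOf G kstar : ℝ)) + wt G kstar β u * tDist G kstar u := by
        rw [← mul_add]
        exact mul_le_mul_of_nonneg_left (abs_deg_sub_avgDeg_le G kstar u) hw0
    _ ≤ kstar + 3 * (kOf G kstar : ℝ) + 1 / β :=
        add_le_add (mul_le_of_le_one_left hk hw1) (wt_mul_tDist_le G kstar hβ u)

lemma fVert_sub_avgDeg_eq (u : Fin n) :
    fVert G kstar β u - avgDeg G =
      wt G kstar β u * ((deg G u : ℝ) - avgDeg G) +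
        ∑ v ∈ univ.erase u, (min (wt G kstar β u) (wt G kstar β v) - wt G kstar β u) *
          ((if G.Adj u v then 1 else 0) - edgeDensity G) := by
  rw [← sum_erase_indicator_adj G u, ← sum_erase_edgeDensity G u, ← sum_sub_distrib, mul_sum,
    fVert, ← sum_sub_distrib, ← sum_add_distrib]
  refine sum_congr rfl fun v _ => ?_
  rw [valPair]; ring

variable {β} in
lemma abs_correction_le (hβ : 0 ≤ β) (u v : Fin n) :
    |(min (wt G kstar β u) (wt G kstar β v) - wt G kstar β u) *
        ((if G.Adj u v then 1 else 0) - edgeDensity G)| ≤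
      if kstar + 3 * (kOf G kstar : ℝ) < |(deg G v : ℝ) - avgDeg G| then 1 else 0 := by
  by_cases hv : kstar + 3 * (kOf G kstar : ℝ) < |(deg G v : ℝ) - avgDeg G|
  · rw [if_pos hv]
    have hwu := wt_le_one G kstar hβ u
    have hmin : 0 ≤ min (wt G kstar β u) (wt G kstar β v) :=
      le_min (wt_nonneg G kstar β u) (wt_nonneg G kstar β v)
    have hp0 := edgeDensity_nonneg G
    have hp1 := edgeDensity_le_one G
    rw [abs_mul, ← one_mul 1]
    refine mul_le_mul ?_ ?_ (abs_nonneg _) zero_le_one <;> rw [abs_le]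
    · constructor <;> linarith [min_le_left (wt G kstar β u) (wt G kstar β v)]
    · split_ifs <;> constructor <;> linarith
  · rw [if_neg hv, wt_eq_one_of_abs_le G kstar β v (not_lt.mp hv),
      min_eq_left (wt_le_one G kstar hβ u)]
    simp

variable {β} in
lemma abs_sum_correction_le (hβ : 0 ≤ β) (u : Fin n) :
    |∑ v ∈ univ.erase u, (min (wt G kstar β u) (wt G kstar β v) - wt G kstar β u) *
        ((if G.Adj u v then 1 else 0) - edgeDensity G)| ≤ kOf G kstar := by
  calc _ ≤ ∑ v ∈ univ.erase u,
          if kstar + 3 * (kOf G kstar : ℝ) < |(deg G v : ℝ) - avgDeg G| then (1 : ℝ) else 0 :=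
        (abs_sum_le_sum_abs _ _).trans (sum_le_sum fun v _ => abs_correction_le G kstar hβ u v)
    _ ≤ farCount G kstar (kOf G kstar) := by
        rw [sum_boole, farCount, Set.ncard_eq_toFinset_card', Set.toFinset_ofPred]
        exact_mod_cast card_le_card (filter_subset_filter _ (erase_subset _ _))
    _ ≤ kOf G kstar := mod_cast farCount_kOf_le G kstar

end

/-- the per-vertex sum satisfies `|f_u(G) - d̄_G| ≤ k* + 5 k_G + 1/β`. -/
theorem fVert_close_to_avg {n : ℕ} (kstar β : ℝ) (hkstar : 0 ≤ kstar) (hβ : 0 < β)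
    (G : SimpleGraph (Fin n)) (u : Fin n) :
    |fVert G kstar β u - avgDeg G| ≤ kstar + 5 * (kOf G kstar : ℝ) + 1 / β := by
  rw [fVert_sub_avgDeg_eq]
  have hmain : |wt G kstar β u * ((deg G u : ℝ) - avgDeg G)| ≤
      kstar + 3 * (kOf G kstar : ℝ) + 1 / β := by
    rw [abs_mul, abs_of_nonneg (wt_nonneg G kstar β u)]
    exact wt_mul_abs_deg_sub_avgDeg_le G hkstar hβ u
  have hcorr := abs_sum_correction_le G kstar hβ.le u
  calc _ ≤ _ + _ := abs_add_le _ _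
    _ ≤ (kstar + 3 * (kOf G kstar : ℝ) + 1 / β) + kOf G kstar := add_le_add hmain hcorr
    _ ≤ kstar + 5 * (kOf G kstar : ℝ) + 1 / β := by linarith [(kOf G kstar).cast_nonneg (α := ℝ)]

end
end

section
/- For all real numbers β > 0, a ≥ 0, b ≥ 0, and ℓ ≥ 0, one has e^{−β·ℓ}·( (a + ℓ + b)·(1 + β·(a + ℓ)) + 1/β ) ≤ 3a + 2b + β·a·(a + b) + 3/β. -/
open MeasureTheory Finset
open scoped Classical

noncomputable section

/-! Multiplying by `β` and substituting `A = β a`, `B = β b`, `x = β ℓ` makes the inequality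
scale-free. The left side then splits as
`e^{-x} (A + B)(1 + A) + x e^{-x} (2A + B) + e^{-x} (1 + x + x²)`,
and the three pieces are bounded using `e^{-x} ≤ 1`, `x e^{-x} ≤ 1` and `e^{-x} (1 + x + x²) ≤ 2`. -/

namespace Real

theorem exp_neg_mul_le_one (x : ℝ) : exp (-x) * x ≤ 1 := by
  rw [exp_neg, inv_mul_le_one₀ (exp_pos x)]
  linarith [add_one_le_exp x]

theorem exp_neg_mul_one_add_add_sq_le_two {x : ℝ} (hx : 0 ≤ x) :
    exp (-x) * (1 + x + x ^ 2) ≤ 2 := by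
  rw [exp_neg, inv_mul_le_iff₀ (exp_pos x)]
  linarith [quadratic_le_exp_of_nonneg hx]

theorem exp_neg_mul_quadratic_le {A B x : ℝ} (hA : 0 ≤ A) (hB : 0 ≤ B) (hx : 0 ≤ x) :
    exp (-x) * ((A + x + B) * (1 + (A + x)) + 1) ≤ 3 * A + 2 * B + A * (A + B) + 3 := by
  have hE₁ : exp (-x) ≤ 1 := exp_le_one_iff.mpr (by linarith)
  have hconst : exp (-x) * ((A + B) * (1 + A)) ≤ (A + B) * (1 + A) :=
    mul_le_of_le_one_left (by positivity) hE₁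
  have hlin : exp (-x) * x * (2 * A + B) ≤ 2 * A + B :=
    mul_le_of_le_one_left (by positivity) (exp_neg_mul_le_one x)
  have hquad := exp_neg_mul_one_add_add_sq_le_two hx
  calc exp (-x) * ((A + x + B) * (1 + (A + x)) + 1)
      = exp (-x) * ((A + B) * (1 + A)) + exp (-x) * x * (2 * A + B)
          + exp (-x) * (1 + x + x ^ 2) := by ring
    _ ≤ 3 * A + 2 * B + A * (A + B) + 3 := by linarith

end Real

/-- the real-analytic inequality used to bound the smooth sensitivity. -/
theorem smooth_sensitivity_inequality (β a b ℓ : ℝ)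
    (hβ : 0 < β) (ha : 0 ≤ a) (hb : 0 ≤ b) (hℓ : 0 ≤ ℓ) :
    Real.exp (-β * ℓ) * ((a + ℓ + b) * (1 + β * (a + ℓ)) + 1 / β) ≤
      3 * a + 2 * b + β * a * (a + b) + 3 / β := by
  have hscaled := Real.exp_neg_mul_quadratic_le (mul_nonneg hβ.le ha) (mul_nonneg hβ.le hb)
    (mul_nonneg hβ.le hℓ)
  calc Real.exp (-β * ℓ) * ((a + ℓ + b) * (1 + β * (a + ℓ)) + 1 / β)
      = Real.exp (-(β * ℓ)) *
          ((β * a + β * ℓ + β * b) * (1 + (β * a + β * ℓ)) + 1) / β := by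
        field_simp
    _ ≤ (3 * (β * a) + 2 * (β * b) + β * a * (β * a + β * b) + 3) / β := by gcongr
    _ = 3 * a + 2 * b + β * a * (a + b) + 3 / β := by field_simp

end
end

section
/- Let ν be the probability measure on ℝ with density z ↦ 2/(√3·π·(1 + z²/3)²) with respect to Lebesgue measure (the Student's t-distribution with 3 degrees of freedom, which has mean 0 and second moment 3). There exists a universal constant C₀ > 0 such that for every n ≥ 2, every natural number k ≥ 1, and every ε ∈ (0,1], the following holds. Set k* = k and β = min(ε, 1/√k), let G be an n-node graph in 𝒢_{n,k} with edge set E, let f and k_G be defined from k* and β as in the concentrated-degree estimator, and let S(G) = sup over real ℓ ≥ 0 of e^{−β·ℓ}·C·((k_G + ℓ + k*)·(1 + β·(k_G + ℓ)) + 1/β), where C > 0 is the constant from the local-sensitivity bound. Then the noisy estimate Â(z) = ( f(G) + (S(G)/ε)·z ) / C(n,2) satisfies ∫ ( p_G − Â(z) )² dν(z) ≤ C₀·(1 + C²)·( k²/(ε²·n⁴) + 1/(ε⁴·n⁴) ). -/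
open MeasureTheory Finset
open scoped Classical

noncomputable section

/-! On a graph in `𝒢_{n,k}` with `k* = k` no degree leaves `I_G`, so `k_G = 1`, every weight is `1`
and `f(G) = |E|`: the estimate is unbiased and its error is the pure noise `S(G) z / (ε C(n,2))`.
Its mean square is `3 (S(G) / (ε C(n,2)))²`, the second moment of `ν` being `3`, and
`S(G) = O(C (k + 1/ε))` because `ℓ^m e^{-βℓ} ≤ m! / β^m` and `1/β ≤ 1/ε + k`. -/

open Real Filter Topology

namespace StudentT3

def density (z : ℝ) : ℝ := 2 / (√3 * π * (1 + z ^ 2 / 3) ^ 2)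

def secondMomentPrimitive (z : ℝ) : ℝ :=
  3 / π * arctan (z / √3) - 9 / (√3 * π) * (z / (3 + z ^ 2))

lemma density_nonneg (z : ℝ) : 0 ≤ density z := by
  unfold density; positivity

lemma continuous_density : Continuous density :=
  continuous_const.div (by fun_prop) fun z => by positivity

lemma density_mul_sq (z : ℝ) :
    density z * z ^ 2 = 18 * z ^ 2 / (√3 * π * (3 + z ^ 2) ^ 2) := by
  unfold density
  field_simp
  ring

lemma hasDerivAt_secondMomentPrimitive (z : ℝ) :
    HasDerivAt secondMomentPrimitive (18 * z ^ 2 / (√3 * π * (3 + z ^ 2) ^ 2)) z := by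
  have h3 : (0 : ℝ) < 3 + z ^ 2 := by positivity
  have hA := (((hasDerivAt_id z).div_const √3).arctan).const_mul (3 / π)
  have hB := ((hasDerivAt_id z).div (((hasDerivAt_id z).pow 2).const_add 3) h3.ne').const_mul
    (9 / (√3 * π))
  refine (hA.sub hB).congr_deriv ?_
  have hs : √3 ^ 2 = 3 := sq_sqrt (by norm_num)
  have : (0 : ℝ) < √3 := by positivity
  simp only [id, Pi.pow_apply, div_pow, hs]
  field_simp
  ring

lemma tendsto_div_three_add_sq {l : Filter ℝ} (hinv : Tendsto (·⁻¹) l (𝓝 0))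
    (hne : ∀ᶠ z in l, z ≠ 0) : Tendsto (fun z : ℝ => z / (3 + z ^ 2)) l (𝓝 0) := by
  have hcont : Continuous fun t : ℝ => t / (3 * t ^ 2 + 1) :=
    continuous_id.div (by fun_prop) fun t => by positivity
  have := (hcont.tendsto 0).comp hinv
  simp only [zero_div] at this
  refine this.congr' (hne.mono fun z hz => ?_)
  simp only [Function.comp_apply]
  field_simp

lemma tendsto_secondMomentPrimitive_atTop :
    Tendsto secondMomentPrimitive atTop (𝓝 (3 / 2)) := by
  have harctan := (tendsto_nhds_of_tendsto_nhdsWithin tendsto_arctan_atTop).comp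
    (tendsto_id.atTop_div_const (by positivity : (0 : ℝ) < √3))
  have h := (harctan.const_mul (3 / π)).sub
    ((tendsto_div_three_add_sq tendsto_inv_atTop_zero (eventually_ne_atTop 0)).const_mul
      (9 / (√3 * π)))
  rwa [mul_zero, sub_zero, show 3 / π * (π / 2) = (3 : ℝ) / 2 by field_simp] at h

lemma tendsto_secondMomentPrimitive_atBot :
    Tendsto secondMomentPrimitive atBot (𝓝 (-(3 / 2))) := by
  have harctan := (tendsto_nhds_of_tendsto_nhdsWithin tendsto_arctan_atBot).comp
    (tendsto_id.atBot_div_const (by positivity : (0 : ℝ) < √3))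
  have h := (harctan.const_mul (3 / π)).sub
    ((tendsto_div_three_add_sq tendsto_inv_atBot_zero (eventually_ne_atBot 0)).const_mul
      (9 / (√3 * π)))
  rwa [mul_zero, sub_zero, mul_neg, show 3 / π * (π / 2) = (3 : ℝ) / 2 by field_simp] at h

lemma integrable_secondMomentIntegrand :
    Integrable fun z : ℝ => 18 * z ^ 2 / (√3 * π * (3 + z ^ 2) ^ 2) := by
  refine (integrable_inv_one_add_sq.const_mul (18 / (√3 * π))).mono'
    ((continuous_const.mul (continuous_pow 2)).div (by fun_prop)
      fun z => by positivity).aestronglyMeasurable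
    (Eventually.of_forall fun z => ?_)
  rw [norm_of_nonneg (by positivity), div_le_iff₀ (by positivity)]
  have : z ^ 2 * (1 + z ^ 2) ≤ (3 + z ^ 2) ^ 2 := by nlinarith [sq_nonneg z]
  field_simp
  nlinarith

end StudentT3

open StudentT3 in
lemma integral_sq_studentT3 : ∫ z, z ^ 2 ∂studentT3 = 3 := by
  rw [show studentT3 = volume.withDensity fun z => ENNReal.ofReal (density z) from rfl,
    integral_withDensity_eq_integral_toReal_smul continuous_density.measurable.ennreal_ofReal
      (Eventually.of_forall fun _ => ENNReal.ofReal_lt_top)]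
  simp_rw [ENNReal.toReal_ofReal (density_nonneg _), smul_eq_mul, density_mul_sq]
  rw [integral_of_hasDerivAt_of_tendsto hasDerivAt_secondMomentPrimitive
    integrable_secondMomentIntegrand tendsto_secondMomentPrimitive_atBot
    tendsto_secondMomentPrimitive_atTop]
  norm_num

section Concentrated

variable {n : ℕ} {G : SimpleGraph (Fin n)} {kstar β : ℝ}

lemma kOf_eq_one_of_farCount_le_one (h : farCount G kstar 1 ≤ 1) : kOf G kstar = 1 :=
  le_antisymm (Nat.sInf_le ⟨one_pos, h⟩)
    (Nat.sInf_mem (s := {m | 0 < m ∧ farCount G kstar m ≤ m}) ⟨1, one_pos, h⟩).1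

lemma Concentrated.farCount_eq_zero (hG : Concentrated G kstar) (m : ℕ) :
    farCount G kstar m = 0 :=
  (Set.ncard_eq_zero (Set.toFinite _)).2 <| Set.eq_empty_of_forall_notMem fun v hv => by
    have : kstar + 3 * (m : ℝ) < kstar := lt_of_lt_of_le hv (hG v)
    linarith [(Nat.cast_nonneg m : (0 : ℝ) ≤ m)]

lemma Concentrated.kOf_eq_one (hG : Concentrated G kstar) : kOf G kstar = 1 :=
  kOf_eq_one_of_farCount_le_one (by rw [hG.farCount_eq_zero]; exact zero_le_one)

lemma Concentrated.tDist_eq_zero (hG : Concentrated G kstar) (v : Fin n) :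
    tDist G kstar v = 0 :=
  max_eq_left <| by linarith [hG v, (Nat.cast_nonneg (kOf G kstar) : (0 : ℝ) ≤ kOf G kstar)]

lemma Concentrated.wt_eq_one (hG : Concentrated G kstar) (v : Fin n) : wt G kstar β v = 1 := by
  simp [wt, hG.tDist_eq_zero v]

lemma fEst_eq_edgeCount_of_wt_eq_one (h : ∀ v, wt G kstar β v = 1) :
    fEst G kstar β = edgeCount G := by
  have hrow (u : Fin n) :
      (∑ v, if u ≠ v then valPair G kstar β u v else 0) = G.degree u := by
    have (v : Fin n) :
        (if u ≠ v then valPair G kstar β u v else 0) = if G.Adj u v then (1 : ℝ) else 0 := by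
      by_cases huv : u = v <;> simp [huv, valPair, h]
    simp_rw [this, sum_boole, ← SimpleGraph.neighborFinset_eq_filter,
      SimpleGraph.card_neighborFinset_eq_degree]
  simp_rw [fEst, hrow]
  rw [← Nat.cast_sum, G.sum_degrees_eq_twice_card_edges, edgeCount, ← Set.ncard_coe_finset,
    SimpleGraph.coe_edgeFinset]
  push_cast
  ring

end Concentrated

lemma pow_mul_exp_neg_mul_le {β ℓ : ℝ} (hβ : 0 < β) (hℓ : 0 ≤ ℓ) (m : ℕ) :
    ℓ ^ m * exp (-(β * ℓ)) ≤ m.factorial / β ^ m := by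
  have h := pow_div_factorial_le_exp _ (mul_nonneg hβ.le hℓ) m
  rw [div_le_iff₀ (by positivity), mul_pow] at h
  rw [exp_neg, ← div_eq_mul_inv, div_le_div_iff₀ (exp_pos _) (by positivity)]
  linarith

lemma exp_neg_mul_mul_le {β a b ℓ : ℝ} (hβ : 0 < β) (ha : 0 ≤ a) (hb : 0 ≤ b) (hℓ : 0 ≤ ℓ) :
    exp (-β * ℓ) * ((a + ℓ + b) * (1 + β * (a + ℓ)) + 1 / β)
      ≤ (a + b) * (2 + β * a) + a + 4 / β := by
  have hE : exp (-(β * ℓ)) ≤ 1 := exp_le_one_iff.2 (by nlinarith)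
  have h1 : ℓ * exp (-(β * ℓ)) ≤ 1 / β := by simpa using pow_mul_exp_neg_mul_le hβ hℓ 1
  have h2 : ℓ ^ 2 * exp (-(β * ℓ)) ≤ 2 / β ^ 2 := by simpa using pow_mul_exp_neg_mul_le hβ hℓ 2
  rw [neg_mul]
  calc exp (-(β * ℓ)) * ((a + ℓ + b) * (1 + β * (a + ℓ)) + 1 / β)
      = exp (-(β * ℓ)) * ((a + b) * (1 + β * a)) + (1 + 2 * β * a + β * b) * (ℓ * exp (-(β * ℓ)))
          + β * (ℓ ^ 2 * exp (-(β * ℓ))) + exp (-(β * ℓ)) * (1 / β) := by ring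
    _ ≤ 1 * ((a + b) * (1 + β * a)) + (1 + 2 * β * a + β * b) * (1 / β)
          + β * (2 / β ^ 2) + 1 * (1 / β) := by gcongr
    _ = (a + b) * (2 + β * a) + a + 4 / β := by field_simp; ring

section SmoothBound

variable {n : ℕ} {G : SimpleGraph (Fin n)} {kstar β C : ℝ}

lemma smoothS_nonneg (hβ : 0 < β) (hC : 0 ≤ C) (hk : 0 ≤ kstar) : 0 ≤ smoothS G kstar β C :=
  Real.iSup_nonneg fun ℓ => mul_nonneg (exp_pos _).le (mul_nonneg hC (by have := ℓ.2; positivity))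

lemma smoothS_le (hβ : 0 < β) (hC : 0 ≤ C) (hk : 0 ≤ kstar) :
    smoothS G kstar β C ≤
      C * ((kOf G kstar + kstar) * (2 + β * kOf G kstar) + kOf G kstar + 4 / β) := by
  have : Nonempty {x : ℝ // 0 ≤ x} := ⟨⟨0, le_rfl⟩⟩
  refine ciSup_le fun ℓ => ?_
  rw [mul_left_comm]
  exact mul_le_mul_of_nonneg_left (exp_neg_mul_mul_le hβ (Nat.cast_nonneg _) hk ℓ.2) hC

lemma Concentrated.smoothS_le (hG : Concentrated G kstar) (hk : 1 ≤ kstar) (hβ : 0 < β)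
    (hβ1 : β ≤ 1) (hC : 0 ≤ C) : smoothS G kstar β C ≤ C * (7 * kstar + 4 / β) := by
  refine (_root_.smoothS_le hβ hC (by linarith)).trans ?_
  rw [hG.kOf_eq_one, Nat.cast_one]
  gcongr
  nlinarith

end SmoothBound

lemma one_div_min_one_div_sqrt_le {ε k : ℝ} (hε : 0 < ε) (hk : 1 ≤ k) :
    1 / min ε (1 / √k) ≤ 1 / ε + k := by
  rcases min_choice ε (1 / √k) with h | h <;> rw [h]
  · linarith
  · rw [one_div_one_div]
    have : √k ≤ k := by
      rw [sqrt_le_left (by linarith)]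
      nlinarith
    have : 0 < 1 / ε := by positivity
    linarith

lemma cast_choose_two_ge {n : ℕ} (hn : 2 ≤ n) : (n : ℝ) ^ 2 / 4 ≤ n.choose 2 := by
  have : (2 : ℝ) ≤ n := by exact_mod_cast hn
  rw [Nat.cast_choose_two]
  nlinarith

lemma integral_sq_sub_add_mul_div {μ : Measure ℝ} {p s q : ℝ} (hq : q ≠ 0) :
    ∫ z, (p - (p * q + s * z) / q) ^ 2 ∂μ = (s / q) ^ 2 * ∫ z, z ^ 2 ∂μ := by
  rw [← integral_const_mul]
  congr 1 with z
  field_simp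
  ring

lemma sq_div_div_mul_three_le {S C k ε q m : ℝ} (hε : 0 < ε) (hm : 0 < m) (hS0 : 0 ≤ S)
    (hS : S ≤ 11 * C * (k + 1 / ε)) (hq : m ^ 2 / 4 ≤ q) :
    (S / ε / q) ^ 2 * 3 ≤
      11616 * (1 + C ^ 2) * (k ^ 2 / (ε ^ 2 * m ^ 4) + 1 / (ε ^ 4 * m ^ 4)) := by
  have hS2 : S ^ 2 ≤ 242 * C ^ 2 * (k ^ 2 + (1 / ε) ^ 2) :=
    calc S ^ 2 ≤ (11 * C * (k + 1 / ε)) ^ 2 := pow_le_pow_left₀ hS0 hS 2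
      _ ≤ 242 * C ^ 2 * (k ^ 2 + (1 / ε) ^ 2) := by nlinarith [sq_nonneg (C * (k - 1 / ε))]
  have hq2 : m ^ 4 / 16 ≤ q ^ 2 := by nlinarith [sq_nonneg m]
  calc (S / ε / q) ^ 2 * 3 = 3 * S ^ 2 / (ε ^ 2 * q ^ 2) := by ring
    _ ≤ 3 * (242 * C ^ 2 * (k ^ 2 + (1 / ε) ^ 2)) / (ε ^ 2 * (m ^ 4 / 16)) := by gcongr
    _ = 11616 * C ^ 2 * (k ^ 2 / (ε ^ 2 * m ^ 4) + 1 / (ε ^ 4 * m ^ 4)) := by field_simp; ring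
    _ ≤ 11616 * (1 + C ^ 2) * (k ^ 2 / (ε ^ 2 * m ^ 4) + 1 / (ε ^ 4 * m ^ 4)) := by
      gcongr; linarith

/-- accuracy of the noisy estimate on `𝒢_{n,k}`: the mean squared
error over the Student-t noise is `O((1+C²)·(k²/(ε²n⁴) + 1/(ε⁴n⁴)))`. -/
theorem accuracy_concentrated :
    ∃ C₀ : ℝ, 0 < C₀ ∧
      ∀ n : ℕ, 2 ≤ n → ∀ k : ℕ, 1 ≤ k → ∀ ε : ℝ, 0 < ε → ε ≤ 1 → ∀ C : ℝ, 0 < C →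
        ∀ G : SimpleGraph (Fin n), Concentrated G (k : ℝ) →
          (∫ z, (edgeDensity G -
              (fEst G (k : ℝ) (min ε (1 / Real.sqrt k)) +
                smoothS G (k : ℝ) (min ε (1 / Real.sqrt k)) C / ε * z) /
                (n.choose 2 : ℝ)) ^ 2 ∂studentT3) ≤
            C₀ * (1 + C ^ 2) *
              ((k : ℝ) ^ 2 / (ε ^ 2 * (n : ℝ) ^ 4) + 1 / (ε ^ 4 * (n : ℝ) ^ 4)) := by
  refine ⟨11616, by norm_num, fun n hn k hk ε hε hε1 C hC G hG => ?_⟩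
  have hk1 : (1 : ℝ) ≤ k := by exact_mod_cast hk
  set β := min ε (1 / √k)
  have hβ : 0 < β := lt_min hε (by positivity)
  have hβ1 : β ≤ 1 := (min_le_left _ _).trans hε1
  have hq : (n : ℝ) ^ 2 / 4 ≤ n.choose 2 := cast_choose_two_ge hn
  have hq0 : (n.choose 2 : ℝ) ≠ 0 := (lt_of_lt_of_le (by positivity) hq).ne'
  have hf : fEst G k β = edgeDensity G * n.choose 2 := by
    rw [fEst_eq_edgeCount_of_wt_eq_one hG.wt_eq_one, edgeDensity, div_mul_cancel₀ _ hq0]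
  have hS : smoothS G k β C ≤ 11 * C * (k + 1 / ε) := by
    have hβinv : 1 / β ≤ 1 / ε + k := one_div_min_one_div_sqrt_le hε hk1
    calc smoothS G k β C ≤ C * (7 * k + 4 * (1 / β)) := by
          rw [← div_eq_mul_one_div]; exact hG.smoothS_le hk1 hβ hβ1 hC.le
      _ ≤ 11 * C * (k + 1 / ε) := by
          nlinarith [mul_le_mul_of_nonneg_left hβinv hC.le, mul_nonneg hC.le (one_div_pos.2 hε).le]
  rw [hf, integral_sq_sub_add_mul_div hq0, integral_sq_studentT3]
  exact sq_div_div_mul_three_le hε (by positivity) (smoothS_nonneg hβ hC.le (by linarith)) hS hq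

end
end

section
/- For every n ≥ 4 and every positive integer i with i + 1 ≤ n/2, let ℓ = ⌊n/(i+1)⌋, let G₀ be the n-node graph consisting of i disjoint cliques whose sizes are each ⌊n/i⌋ or ⌈n/i⌉ (summing to n), and let G₁ be the n-node graph consisting of i+1 disjoint cliques whose sizes are each ⌊n/(i+1)⌋ or ⌈n/(i+1)⌉ (summing to n). Then G₀ has at least ℓ(ℓ+1)/2 more edges than G₁, and consequently p_{G₀} − p_{G₁} ≥ ℓ²/n². -/
open MeasureTheory Finset
open scoped Classical

noncomputable section

/-!
Counting edges through degrees, a union of `k` cliques with block sizes `s_j` has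
`2|E| = ∑ s_j (s_j - 1)`. If every `s_j` is `q` or `q + 1`, this is `2 n q - k q (q + 1)`, because
`s (s - 1)` agrees with its chord on `{q, q + 1}`. With `q = ⌊n/i⌋` and `ℓ = ⌊n/(i+1)⌋` the gap
`2|E₀| - 2|E₁| - ℓ(ℓ+1)` becomes `g q - g ℓ` for `g x = 2 n x - i x (x + 1)`, and
`g b - g a = (b - a) (2 (n - i b) + i (b - a - 1)) ≥ 0` for integers `a ≤ b` with `i b ≤ n`.
The density bound then follows from `ℓ(ℓ+1) / (n(n-1)) ≥ ℓ² / n²`.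
-/

section CliqueUnion

variable {n k : ℕ} (π : Fin n → Fin k)

lemma degree_cliqueUnion (v : Fin n) : (cliqueUnion π).degree v = #{u | π u = π v} - 1 := by
  have : (cliqueUnion π).neighborFinset v = ({u | π u = π v} : Finset _).erase v := by
    ext u
    rw [SimpleGraph.mem_neighborFinset]
    simp [cliqueUnion, eq_comm, and_comm]
  rw [SimpleGraph.degree, this, card_erase_of_mem (by simp)]

lemma two_mul_edgeCount_cliqueUnion :
    2 * edgeCount (cliqueUnion π) = ∑ j, #{v | π v = j} * (#{v | π v = j} - 1) := by
  rw [edgeCount, ← SimpleGraph.coe_edgeFinset, Set.ncard_coe_finset,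
    ← SimpleGraph.sum_degrees_eq_twice_card_edges, ← sum_fiberwise univ π]
  refine sum_congr rfl fun j _ => ?_
  rw [sum_congr rfl fun v hv => by rw [degree_cliqueUnion, (mem_filter.mp hv).2], sum_const,
    smul_eq_mul]

lemma two_mul_edgeCount_cliqueUnion_of_balanced {q : ℕ}
    (hπ : ∀ j, #{v | π v = j} = q ∨ #{v | π v = j} = q + 1) :
    (2 * edgeCount (cliqueUnion π) : ℤ) = 2 * n * q - k * q * (q + 1) := by
  have chord : ∀ j, ((#{v | π v = j} * (#{v | π v = j} - 1) : ℕ) : ℤ) =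
      2 * q * #{v | π v = j} - q * (q + 1) := by
    intro j
    rcases hπ j with h | h <;> rw [h]
    · rcases q with _ | q
      · simp
      · push_cast [Nat.add_sub_cancel]; ring
    · push_cast [Nat.add_sub_cancel]; ring
  have hsum : ∑ j, #{v | π v = j} = n := by
    rw [← card_eq_sum_card_fiberwise (s := univ) (by simp), card_univ, Fintype.card_fin]
  rw [← Nat.cast_ofNat, ← Nat.cast_mul, two_mul_edgeCount_cliqueUnion, Nat.cast_sum,
    sum_congr rfl fun j _ => chord j, sum_sub_distrib, ← mul_sum]
  simp only [← Nat.cast_sum, hsum, sum_const, card_univ, Fintype.card_fin, nsmul_eq_mul]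
  ring

end CliqueUnion

lemma eq_div_or_eq_div_add_one {n m k s : ℕ} (hnm : n ≤ m) (hm : m ≤ n + k)
    (hs : s = n / k ∨ s = m / k) : s = n / k ∨ s = n / k + 1 := by
  have hlo : n / k ≤ m / k := Nat.div_le_div_right hnm
  have hhi : m / k ≤ n / k + 1 := by
    rcases k.eq_zero_or_pos with rfl | hk
    · simp
    · exact (Nat.div_le_div_right hm).trans (Nat.add_div_right n hk).le
  omega

lemma two_mul_mul_sub_mul_mul_succ_le {n i a b : ℤ} (hi : 0 ≤ i) (hab : a ≤ b)
    (hb : i * b ≤ n) : 2 * n * a - i * a * (a + 1) ≤ 2 * n * b - i * b * (b + 1) := by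
  have hgap : 0 ≤ (b - a) * (b - a - 1) := by
    rcases hab.lt_or_eq with h | rfl
    · nlinarith
    · simp
  nlinarith [mul_nonneg hi hgap, mul_nonneg (sub_nonneg.mpr hab) (sub_nonneg.mpr hb)]

lemma sq_div_sq_le_edgeDensity_sub {n m : ℕ} (hn : 2 ≤ n) {G₀ G₁ : SimpleGraph (Fin n)}
    (h : 2 * edgeCount G₁ + m * (m + 1) ≤ 2 * edgeCount G₀) :
    (m : ℝ) ^ 2 / (n : ℝ) ^ 2 ≤ edgeDensity G₀ - edgeDensity G₁ := by
  have hnR : (2 : ℝ) ≤ n := by exact_mod_cast hn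
  have hR : 2 * (edgeCount G₁ : ℝ) + m * (m + 1) ≤ 2 * edgeCount G₀ := by exact_mod_cast h
  have hm : (0 : ℝ) ≤ m := m.cast_nonneg
  rw [edgeDensity, edgeDensity, Nat.cast_choose_two, div_sub_div_same,
    div_le_div_iff₀ (by positivity) (by nlinarith)]
  nlinarith [mul_le_mul_of_nonneg_right hR (sq_nonneg (n : ℝ)),
    mul_nonneg (mul_nonneg hm hm) (by linarith : (0 : ℝ) ≤ n)]

theorem clique_union_edge_gap_general (n : ℕ) (hn : 4 ≤ n) (i : ℕ) (hi : 1 ≤ i)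
    (π₀ : Fin n → Fin i) (π₁ : Fin n → Fin (i + 1))
    (h₀ : ∀ j : Fin i, {v : Fin n | π₀ v = j}.ncard = n / i ∨
      {v : Fin n | π₀ v = j}.ncard = (n + i - 1) / i)
    (h₁ : ∀ j : Fin (i + 1), {v : Fin n | π₁ v = j}.ncard = n / (i + 1) ∨
      {v : Fin n | π₁ v = j}.ncard = (n + i) / (i + 1)) :
    edgeCount (cliqueUnion π₁) + (n / (i + 1)) * (n / (i + 1) + 1) / 2 ≤
      edgeCount (cliqueUnion π₀) ∧
    ((n / (i + 1) : ℕ) : ℝ) ^ 2 / (n : ℝ) ^ 2 ≤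
      edgeDensity (cliqueUnion π₀) - edgeDensity (cliqueUnion π₁) := by
  simp only [Set.ncard_eq_toFinset_card', Set.toFinset_ofPred] at h₀ h₁
  set q := n / i
  set L := n / (i + 1)
  have hE₀ := two_mul_edgeCount_cliqueUnion_of_balanced (q := q) π₀
    fun j => eq_div_or_eq_div_add_one (by omega) (by omega) (h₀ j)
  have hE₁ := two_mul_edgeCount_cliqueUnion_of_balanced (q := L) π₁
    fun j => eq_div_or_eq_div_add_one (by omega) (by omega) (h₁ j)
  have hmono := two_mul_mul_sub_mul_mul_succ_le (n := n) (a := L) (b := q) i.cast_nonneg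
    (Nat.cast_le.mpr (Nat.div_le_div_left (by omega) hi)) (by exact_mod_cast Nat.mul_div_le n i)
  have hgap : 2 * edgeCount (cliqueUnion π₁) + L * (L + 1) ≤ 2 * edgeCount (cliqueUnion π₀) := by
    zify
    push_cast at hE₁
    linarith
  exact ⟨by omega, sq_div_sq_le_edgeDensity_sub (by omega) hgap⟩

/-- comparing unions of `i` and `i+1` near-equal cliques: the former
has at least `ℓ(ℓ+1)/2` more edges, where `ℓ = ⌊n/(i+1)⌋`, hence the edge
densities differ by at least `ℓ²/n²`. -/
theorem clique_union_edge_gap (n : ℕ) (hn : 4 ≤ n) (i : ℕ) (hi : 1 ≤ i)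
    (hin : i + 1 ≤ n / 2)
    (π₀ : Fin n → Fin i) (π₁ : Fin n → Fin (i + 1))
    (h₀ : ∀ j : Fin i, {v : Fin n | π₀ v = j}.ncard = n / i ∨
      {v : Fin n | π₀ v = j}.ncard = (n + i - 1) / i)
    (h₁ : ∀ j : Fin (i + 1), {v : Fin n | π₁ v = j}.ncard = n / (i + 1) ∨
      {v : Fin n | π₁ v = j}.ncard = (n + i) / (i + 1)) :
    edgeCount (cliqueUnion π₁) + (n / (i + 1)) * (n / (i + 1) + 1) / 2 ≤
      edgeCount (cliqueUnion π₀) ∧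
    ((n / (i + 1) : ℕ) : ℝ) ^ 2 / (n : ℝ) ^ 2 ≤
      edgeDensity (cliqueUnion π₀) - edgeDensity (cliqueUnion π₁) :=
  clique_union_edge_gap_general n hn i hi π₀ π₁ h₀ h₁

end
end
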